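/- Let A be a semiprime noetherian graded k-subalgebra of the skew polynomial ring D[t;σ]. Then KA = AK (where KA denotes the set of finite sums Σ γ_i a_i with γ_i ∈ K, a_i ∈ A, and AK the set of finite sums Σ a_i γ_i); in particular, KA is a graded k-subalgebra of D[t;σ]. -/

import Mathlib

/-- A presentation of the skew polynomial ring `D[t;σ]` over the `k`-algebra `D`:
`S` is a `k`-algebra containing `D` (via the embedding `emb`) together with an
element `t` satisfying `t·γ = σ(γ)·t` for `γ ∈ D`, such that `S` is a free left
`D`-module with basis `{tⁿ : n ≥ 0}` (every element has a unique representation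
`Σ emb γₙ * tⁿ`).  `S` is ℕ-graded with `D` in degree `0` and `deg t = 1`. -/
structure SkewPolyPres (k : Type*) [CommRing k] (D : Type*) [Ring D] [Algebra k D]
    (σ : D ≃ₐ[k] D) (S : Type*) [Ring S] [Algebra k S] where
  emb : D →ₐ[k] S
  t : S
  skew : ∀ γ : D, t * emb γ = emb (σ γ) * t
  repr_exists : ∀ s : S, ∃ f : ℕ →₀ D, s = f.sum fun n γ => emb γ * t ^ n
  repr_unique : ∀ f : ℕ →₀ D, (f.sum fun n γ => emb γ * t ^ n) = 0 → f = 0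

namespace SkewPolyPres

variable {k : Type*} [CommRing k] {D : Type*} [Ring D] [Algebra k D]
    {σ : D ≃ₐ[k] D} {S : Type*} [Ring S] [Algebra k S] (sp : SkewPolyPres k D σ S)

/-- The degree-`n` homogeneous component `D·tⁿ` of `S = D[t;σ]`. -/
def deg (n : ℕ) : Set S := {s | ∃ γ : D, s = sp.emb γ * sp.t ^ n}

/-- A `k`-subalgebra `A` of `S = D[t;σ]` is graded if
`A = ⊕ₙ (A ∩ D·tⁿ)`, i.e. all homogeneous components of elements of `A` lie in `A`. -/
def IsGradedSubalgebra (A : Subalgebra k S) : Prop :=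
  ∀ a ∈ A, ∀ f : ℕ →₀ D, a = (f.sum fun n γ => sp.emb γ * sp.t ^ n) →
    ∀ n, sp.emb (f n) * sp.t ^ n ∈ A

/-- The set `KA` of finite sums `Σ γᵢ·aᵢ` with `γᵢ ∈ K` (the centre of `D`) and
`aᵢ ∈ A`, as an additive submonoid of `S = D[t;σ]`. -/
def KAset (A : Subalgebra k S) : AddSubmonoid S :=
  AddSubmonoid.closure {s : S | ∃ γ ∈ Subring.center D, ∃ a ∈ A, s = sp.emb γ * a}

/-- The set `AK` of finite sums `Σ aᵢ·γᵢ` with `aᵢ ∈ A` and `γᵢ ∈ K` (the centre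
of `D`), as an additive submonoid of `S = D[t;σ]`. -/
def AKset (A : Subalgebra k S) : AddSubmonoid S :=
  AddSubmonoid.closure {s : S | ∃ γ ∈ Subring.center D, ∃ a ∈ A, s = a * sp.emb γ}

end SkewPolyPres

/-- A ring is semiprime if it has no nonzero nilpotent two-sided ideal.
(An ideal `I` is nilpotent if `Iⁿ = 0` for some `n ≥ 1`, i.e. every product of `n`
elements of `I` vanishes.) -/
def IsSemiprimeRing (R : Type*) [Ring R] : Prop :=
  ∀ I : TwoSidedIdeal R,
    (∃ n : ℕ, 0 < n ∧ ∀ f : Fin n → R, (∀ i, f i ∈ I) → (List.ofFn f).prod = 0) →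
    ∀ a ∈ I, a = (0 : R)

/-!
For central `γ ∈ K` and a homogeneous element `δ tⁿ` one has `(δ tⁿ) γ = σⁿ(γ) (δ tⁿ)`, and
`σⁿ` maps `K` onto itself. Since a graded subalgebra `A` contains the homogeneous components
of its elements, every `a γ` with `a ∈ A` is a sum of terms `γ' aₙ` with `γ' ∈ K`, `aₙ ∈ A`, and
symmetrically; hence `KA = AK`. Then `KA · KA = K (AK) A = K K A A ⊆ KA`, so `KA` is a
subalgebra, and it is graded because left multiplication by `K` preserves degrees.
-/

open scoped Pointwise

namespace SkewPolyPres

variable {k : Type*} [CommRing k] {D : Type*} [Ring D] [Algebra k D]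
    {σ : D ≃ₐ[k] D} {S : Type*} [Ring S] [Algebra k S] (sp : SkewPolyPres k D σ S)

noncomputable def coeff (s : S) : ℕ →₀ D := (sp.repr_exists s).choose

lemma coeff_spec (s : S) : s = (sp.coeff s).sum fun n γ => sp.emb γ * sp.t ^ n :=
  (sp.repr_exists s).choose_spec

lemma coeff_eq_of_eq_sum {s : S} {f : ℕ →₀ D}
    (h : s = f.sum fun n γ => sp.emb γ * sp.t ^ n) : sp.coeff s = f := by
  have hsub : ((sp.coeff s - f).sum fun n γ => sp.emb γ * sp.t ^ n) = 0 := by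
    rw [Finsupp.sum_sub_index (fun n γ₁ γ₂ => by rw [map_sub, sub_mul]), ← h, ← sp.coeff_spec,
      sub_self]
  exact sub_eq_zero.mp (sp.repr_unique _ hsub)

lemma coeff_zero : sp.coeff (0 : S) = 0 :=
  sp.coeff_eq_of_eq_sum (Finsupp.sum_zero_index).symm

lemma coeff_add (x y : S) : sp.coeff (x + y) = sp.coeff x + sp.coeff y := by
  refine sp.coeff_eq_of_eq_sum ?_
  rw [Finsupp.sum_add_index' (fun n => by rw [map_zero, zero_mul])
    (fun n γ₁ γ₂ => by rw [map_add, add_mul]), ← sp.coeff_spec, ← sp.coeff_spec]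

lemma coeff_emb_mul (γ : D) (x : S) :
    sp.coeff (sp.emb γ * x) = (sp.coeff x).mapRange (γ * ·) (mul_zero γ) := by
  refine sp.coeff_eq_of_eq_sum ?_
  rw [Finsupp.sum_mapRange_index (fun n => by rw [map_zero, zero_mul])]
  conv_lhs => rw [sp.coeff_spec x]
  rw [Finsupp.mul_sum]
  exact Finsupp.sum_congr fun n _ => by rw [map_mul, mul_assoc]

noncomputable def component (n : ℕ) : S →+ S where
  toFun x := sp.emb (sp.coeff x n) * sp.t ^ n
  map_zero' := by rw [coeff_zero, Finsupp.coe_zero, Pi.zero_apply, map_zero, zero_mul]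
  map_add' x y := by rw [coeff_add, Finsupp.add_apply, map_add, add_mul]

lemma component_apply (n : ℕ) (x : S) :
    sp.component n x = sp.emb (sp.coeff x n) * sp.t ^ n :=
  rfl

lemma sum_component (x : S) : ∑ n ∈ (sp.coeff x).support, sp.component n x = x :=
  (sp.coeff_spec x).symm

lemma component_emb_mul (n : ℕ) (γ : D) (x : S) :
    sp.component n (sp.emb γ * x) = sp.emb γ * sp.component n x := by
  rw [component_apply, component_apply, coeff_emb_mul, Finsupp.mapRange_apply, map_mul,
    mul_assoc]

lemma t_pow_mul_emb (n : ℕ) (γ : D) :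
    sp.t ^ n * sp.emb γ = sp.emb ((σ ^ n) γ) * sp.t ^ n := by
  induction n with
  | zero => simp
  | succ n ih =>
    rw [pow_succ', mul_assoc, ih, ← mul_assoc, sp.skew, mul_assoc, ← pow_succ', pow_succ' σ,
      AlgEquiv.mul_apply]

lemma component_mul_emb (n : ℕ) {γ : D} (hγ : γ ∈ Subring.center D) (x : S) :
    sp.component n x * sp.emb γ = sp.emb ((σ ^ n) γ) * sp.component n x := by
  have hcomm : sp.coeff x n * (σ ^ n) γ = (σ ^ n) γ * sp.coeff x n :=
    Subring.mem_center_iff.mp (MulEquivClass.apply_mem_center (σ ^ n) hγ) _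
  rw [component_apply, mul_assoc, t_pow_mul_emb, ← mul_assoc, ← map_mul, hcomm, map_mul,
    mul_assoc]

lemma emb_mul_component (n : ℕ) {γ : D} (hγ : γ ∈ Subring.center D) (x : S) :
    sp.emb γ * sp.component n x = sp.component n x * sp.emb ((σ ^ n).symm γ) := by
  rw [component_mul_emb _ _ (MulEquivClass.apply_mem_center _ hγ), AlgEquiv.apply_symm_apply]

lemma isGradedSubalgebra_iff (A : Subalgebra k S) :
    sp.IsGradedSubalgebra A ↔ ∀ a ∈ A, ∀ n, sp.component n a ∈ A := by
  refine ⟨fun h a ha n => h a ha _ (sp.coeff_spec a) n, fun h a ha f hf n => ?_⟩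
  rw [← sp.coeff_eq_of_eq_sum hf]
  exact h a ha n

variable {sp} {A : Subalgebra k S}

lemma emb_mul_mem_AKset (hA : sp.IsGradedSubalgebra A) {γ : D} (hγ : γ ∈ Subring.center D)
    {a : S} (ha : a ∈ A) : sp.emb γ * a ∈ sp.AKset A := by
  rw [← sp.sum_component a, Finset.mul_sum]
  exact sum_mem fun n _ => AddSubmonoid.subset_closure
    ⟨_, MulEquivClass.apply_mem_center _ hγ, _, (sp.isGradedSubalgebra_iff A).1 hA a ha n,
      sp.emb_mul_component n hγ a⟩

lemma mul_emb_mem_KAset (hA : sp.IsGradedSubalgebra A) {γ : D} (hγ : γ ∈ Subring.center D)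
    {a : S} (ha : a ∈ A) : a * sp.emb γ ∈ sp.KAset A := by
  rw [← sp.sum_component a, Finset.sum_mul]
  exact sum_mem fun n _ => AddSubmonoid.subset_closure
    ⟨_, MulEquivClass.apply_mem_center _ hγ, _, (sp.isGradedSubalgebra_iff A).1 hA a ha n,
      sp.component_mul_emb n hγ a⟩

lemma KAset_eq_AKset (hA : sp.IsGradedSubalgebra A) : sp.KAset A = sp.AKset A :=
  le_antisymm
    (AddSubmonoid.closure_le.2 fun _ ⟨_, hγ, _, ha, hs⟩ => hs ▸ emb_mul_mem_AKset hA hγ ha)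
    (AddSubmonoid.closure_le.2 fun _ ⟨_, hγ, _, ha, hs⟩ => hs ▸ mul_emb_mem_KAset hA hγ ha)

lemma emb_mul_mul_mem_KAset {γ : D} (hγ : γ ∈ Subring.center D) {b : S} (hb : b ∈ A) {x : S}
    (hx : x ∈ sp.KAset A) : sp.emb γ * x * b ∈ sp.KAset A := by
  induction hx using AddSubmonoid.closure_induction with
  | mem x hx =>
    obtain ⟨γ', hγ', a, ha, rfl⟩ := hx
    refine AddSubmonoid.subset_closure ⟨γ * γ', mul_mem hγ hγ', a * b, mul_mem ha hb, ?_⟩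
    simp only [map_mul, mul_assoc]
  | zero => rw [mul_zero, zero_mul]; exact zero_mem _
  | add x y _ _ hx hy => rw [mul_add, add_mul]; exact add_mem hx hy

lemma KAset_mul_le (hA : sp.IsGradedSubalgebra A) : sp.KAset A * sp.KAset A ≤ sp.KAset A := by
  rw [KAset, AddSubmonoid.closure_mul_closure, AddSubmonoid.closure_le]
  rintro _ ⟨_, ⟨γ, hγ, a, ha, rfl⟩, _, ⟨δ, hδ, b, hb, rfl⟩, rfl⟩
  have hmem := emb_mul_mul_mem_KAset hγ hb (mul_emb_mem_KAset hA hδ ha)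
  simp only [mul_assoc] at hmem ⊢
  exact hmem

lemma component_mem_KAset (hA : sp.IsGradedSubalgebra A) (n : ℕ) {x : S}
    (hx : x ∈ sp.KAset A) : sp.component n x ∈ sp.KAset A := by
  refine (AddSubmonoid.closure_le (S := (sp.KAset A).comap (sp.component n))).2 ?_ hx
  rintro _ ⟨γ, hγ, a, ha, rfl⟩
  rw [SetLike.mem_coe, AddSubmonoid.mem_comap, component_emb_mul]
  exact AddSubmonoid.subset_closure
    ⟨γ, hγ, _, (sp.isGradedSubalgebra_iff A).1 hA a ha n, rfl⟩

variable (sp A) in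
noncomputable def KASubalgebra (hA : sp.IsGradedSubalgebra A) : Subalgebra k S where
  carrier := sp.KAset A
  add_mem' := add_mem
  zero_mem' := zero_mem _
  mul_mem' hx hy := AddSubmonoid.mul_le.1 (KAset_mul_le hA) _ hx _ hy
  algebraMap_mem' c := AddSubmonoid.subset_closure
    ⟨algebraMap k D c, Set.algebraMap_mem_center c, 1, A.one_mem,
      by rw [mul_one, AlgHom.commutes]⟩

lemma isGradedSubalgebra_KASubalgebra (hA : sp.IsGradedSubalgebra A) :
    sp.IsGradedSubalgebra (sp.KASubalgebra A hA) :=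
  (sp.isGradedSubalgebra_iff _).2 fun _ hx n => component_mem_KAset hA n hx

end SkewPolyPres

theorem KA_eq_AK_and_isGradedSubalgebra_general
    (k : Type) [Field k]
    (D : Type) [Ring D] [Algebra k D]
    (σ : D ≃ₐ[k] D)
    (S : Type) [Ring S] [Algebra k S] (sp : SkewPolyPres k D σ S)
    (A : Subalgebra k S)
    (hgraded : sp.IsGradedSubalgebra A) :
    sp.KAset A = sp.AKset A ∧
      ∃ B : Subalgebra k S, (B : Set S) = (sp.KAset A : Set S) ∧
        sp.IsGradedSubalgebra B :=
  ⟨SkewPolyPres.KAset_eq_AKset hgraded, sp.KASubalgebra A hgraded, rfl,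
    SkewPolyPres.isGradedSubalgebra_KASubalgebra hgraded⟩

/-- Let `k` be an algebraically closed field, `D` a semisimple
`k`-algebra which is finite as a module over its centre `K`, `σ` a `k`-algebra
automorphism of `D`, and `S = D[t;σ]` the skew polynomial ring.  Let `A` be a
semiprime noetherian graded `k`-subalgebra of `D[t;σ]`.  Then `KA = AK` and, in
particular, `KA` is a graded `k`-subalgebra of `D[t;σ]`. -/
theorem KA_eq_AK_and_isGradedSubalgebra
    (k : Type) [Field k] [IsAlgClosed k]
    (D : Type) [Ring D] [Algebra k D] [IsSemisimpleRing D]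
    (hDfin : Module.Finite (Subring.center D) D)
    (σ : D ≃ₐ[k] D)
    (S : Type) [Ring S] [Algebra k S] (sp : SkewPolyPres k D σ S)
    (A : Subalgebra k S)
    (hgraded : sp.IsGradedSubalgebra A)
    (hsemiprime : IsSemiprimeRing ↥A)
    (hnoeth : IsNoetherianRing ↥A) (hnoeth_op : IsNoetherianRing (↥A)ᵐᵒᵖ) :
    sp.KAset A = sp.AKset A ∧
      ∃ B : Subalgebra k S, (B : Set S) = (sp.KAset A : Set S) ∧
        sp.IsGradedSubalgebra B :=
  KA_eq_AK_and_isGradedSubalgebra_general k D σ S sp A hgraded
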